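/- Let X, Y be real random variables with X = Y outside an event E, finite third moments E|X|³ ≤ M³, E|Y|³ ≤ M³, and suppose |E X| ≤ K, |E Y| ≤ K. Then |Var(X) − Var(Y)| ≤ 2M² P(E)^{1/3} + 4KM P(E)^{2/3}. -/

import Mathlib

open MeasureTheory ProbabilityTheory
open scoped ENNReal

/-- Hölder: ∫ |f| · 1_E ≤ (∫|f|^p)^(1/p) (P E)^(1/q). -/
lemma holder_indicator {Ω : Type*} [MeasurableSpace Ω] (P : Measure Ω) [IsProbabilityMeasure P]
    {f : Ω → ℝ} {p q : ℝ} (hpq : p.HolderConjugate q)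
    (hf : MemLp f (ENNReal.ofReal p) P) {E : Set Ω} (hE : MeasurableSet E) :
    ∫ ω, |f ω| * E.indicator (fun _ => (1:ℝ)) ω ∂P ≤
      (∫ ω, |f ω| ^ p ∂P) ^ (1/p) * (P E).toReal ^ (1/q) := by
  have hg : MemLp (E.indicator (fun _ => (1:ℝ))) (ENNReal.ofReal q) P :=
    memLp_indicator_const _ hE 1 (Or.inr (measure_ne_top _ _))
  have h := integral_mul_norm_le_Lp_mul_Lq hpq hf hg
  have h1 : ∀ ω, ‖E.indicator (fun _ => (1:ℝ)) ω‖ ^ q = E.indicator (fun _ => (1:ℝ)) ω := by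
    intro ω
    by_cases hω : ω ∈ E <;>
      simp [Set.indicator_apply, hω, Real.zero_rpow hpq.symm.ne_zero]
  have h2 : ∫ ω, ‖E.indicator (fun _ => (1:ℝ)) ω‖ ^ q ∂P = (P E).toReal := by
    simp only [h1]
    rw [integral_indicator_const _ hE]
    simp [Measure.real]
  calc ∫ ω, |f ω| * E.indicator (fun _ => (1:ℝ)) ω ∂P
      ≤ ∫ ω, ‖f ω‖ * ‖E.indicator (fun _ => (1:ℝ)) ω‖ ∂P := by
        refine le_of_eq (integral_congr_ae (Filter.Eventually.of_forall fun ω => ?_))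
        simp only [Real.norm_eq_abs]
        by_cases hω : ω ∈ E <;> simp [Set.indicator_apply, hω]
    _ ≤ (∫ ω, ‖f ω‖ ^ p ∂P) ^ (1/p) * (∫ ω, ‖E.indicator (fun _ => (1:ℝ)) ω‖ ^ q ∂P) ^ (1/q) := h
    _ = (∫ ω, |f ω| ^ p ∂P) ^ (1/p) * (P E).toReal ^ (1/q) := by
        rw [h2]; simp [Real.norm_eq_abs]


lemma memL3 {Ω : Type*} [MeasurableSpace Ω] {P : Measure Ω} {X : Ω → ℝ} (hX : Measurable X)
    (hXi : Integrable (fun ω => |X ω| ^ 3) P) : MemLp X 3 P := by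
  rw [← memLp_norm_rpow_iff (p := 3) (q := 3) hX.aestronglyMeasurable (by norm_num) (by norm_num)]
  have : (3 : ℝ≥0∞) / 3 = 1 := by
    rw [ENNReal.div_self] <;> norm_num
  rw [this, memLp_one_iff_integrable]
  have : (fun x => ‖X x‖ ^ (3 : ℝ≥0∞).toReal) = fun ω => |X ω| ^ 3 := by
    funext x
    rw [Real.norm_eq_abs, show (3 : ℝ≥0∞).toReal = ((3:ℕ):ℝ) by norm_num, Real.rpow_natCast]
  rw [this]
  exact hXi

lemma intnn {Ω : Type*} [MeasurableSpace Ω] (P : Measure Ω) (X : Ω → ℝ) (n : ℕ) :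
    0 ≤ ∫ ω, |X ω| ^ n ∂P :=
  integral_nonneg fun ω => pow_nonneg (abs_nonneg _) n

lemma bound_sq {Ω : Type*} [MeasurableSpace Ω] (P : Measure Ω) [IsProbabilityMeasure P]
    {X : Ω → ℝ} (hX : Measurable X) {E : Set Ω} (hE : MeasurableSet E) {M : ℝ} (hM : 0 < M)
    (hXi : Integrable (fun ω => |X ω| ^ 3) P) (hX3 : ∫ ω, |X ω| ^ 3 ∂P ≤ M ^ 3) :
    ∫ ω, |X ω| ^ 2 * E.indicator (fun _ => (1:ℝ)) ω ∂P ≤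
      M ^ 2 * (P E).toReal ^ ((1:ℝ)/3) := by
  have h3 : MemLp X 3 P := memL3 hX hXi
  have hpq : (3/2 : ℝ).HolderConjugate 3 := by
    constructor <;> norm_num
  have hf : MemLp (fun ω => |X ω| ^ 2) (ENNReal.ofReal (3/2)) P := by
    have := h3.norm_rpow_div 2
    have e1 : (fun x => ‖X x‖ ^ (2 : ℝ≥0∞).toReal) = fun ω => |X ω| ^ 2 := by
      funext x
      rw [Real.norm_eq_abs, show (2 : ℝ≥0∞).toReal = ((2:ℕ):ℝ) by norm_num, Real.rpow_natCast]
    have e2 : ENNReal.ofReal (3/2) = 3 / 2 := by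
      rw [ENNReal.ofReal_div_of_pos (by norm_num)]
      simp
    rw [e1] at this
    rwa [← e2] at this
  have h := holder_indicator P hpq hf hE
  simp only [abs_pow, abs_abs] at h
  have e4 : ∀ ω : Ω, (|X ω| ^ 2 : ℝ) ^ (3/2 : ℝ) = |X ω| ^ 3 := by
    intro ω
    rw [← Real.rpow_natCast |X ω| 2, ← Real.rpow_mul (abs_nonneg _),
      show (((2:ℕ):ℝ)) * (3/2) = ((3:ℕ):ℝ) by norm_num, Real.rpow_natCast]
  simp only [e4] at h
  rw [show (1:ℝ)/(3/2) = 2/3 by norm_num] at h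
  refine h.trans ?_
  have hM2 : (∫ ω, |X ω| ^ 3 ∂P) ^ ((2:ℝ)/3) ≤ M ^ 2 := by
    calc (∫ ω, |X ω| ^ 3 ∂P) ^ ((2:ℝ)/3) ≤ (M ^ 3 : ℝ) ^ ((2:ℝ)/3) :=
          Real.rpow_le_rpow (intnn P X 3) hX3 (by norm_num)
      _ = M ^ 2 := by
          rw [← Real.rpow_natCast M 3, ← Real.rpow_mul hM.le]
          norm_num [Real.rpow_natCast]
  gcongr

lemma bound_one {Ω : Type*} [MeasurableSpace Ω] (P : Measure Ω) [IsProbabilityMeasure P]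
    {X : Ω → ℝ} (hX : Measurable X) {E : Set Ω} (hE : MeasurableSet E) {M : ℝ} (hM : 0 < M)
    (hXi : Integrable (fun ω => |X ω| ^ 3) P) (hX3 : ∫ ω, |X ω| ^ 3 ∂P ≤ M ^ 3) :
    ∫ ω, |X ω| * E.indicator (fun _ => (1:ℝ)) ω ∂P ≤
      M * (P E).toReal ^ ((2:ℝ)/3) := by
  have h3 : MemLp X 3 P := memL3 hX hXi
  have hpq : (3 : ℝ).HolderConjugate (3/2) := by
    constructor <;> norm_num
  have hf : MemLp X (ENNReal.ofReal 3) P := by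
    rwa [show ENNReal.ofReal 3 = 3 by simp]
  have h := holder_indicator P hpq hf hE
  have e4 : ∀ ω : Ω, (|X ω| : ℝ) ^ (3 : ℝ) = |X ω| ^ 3 := by
    intro ω
    rw [show (3:ℝ) = ((3:ℕ):ℝ) by norm_num, Real.rpow_natCast]
  simp only [e4] at h
  rw [show (1:ℝ)/(3/2) = 2/3 by norm_num] at h
  refine h.trans ?_
  have hM1 : (∫ ω, |X ω| ^ 3 ∂P) ^ ((1:ℝ)/3) ≤ M := by
    calc (∫ ω, |X ω| ^ 3 ∂P) ^ ((1:ℝ)/3) ≤ (M ^ 3 : ℝ) ^ ((1:ℝ)/3) :=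
          Real.rpow_le_rpow (intnn P X 3) hX3 (by norm_num)
      _ = M := by
          rw [← Real.rpow_natCast M 3, ← Real.rpow_mul hM.le]
          norm_num
  gcongr

/-- If `X = Y` outside the event `E`, both have third absolute moments bounded by `M³`,
and `|E X| ≤ K`, `|E Y| ≤ K`, then `|Var(X) − Var(Y)| ≤ 2M² P(E)^{1/3} + 4KM P(E)^{2/3}`. -/
theorem stmt_5 {Ω : Type*} [MeasurableSpace Ω] (P : Measure Ω) [IsProbabilityMeasure P]
    (X Y : Ω → ℝ) (hX : Measurable X) (hY : Measurable Y)
    (E : Set Ω) (hE : MeasurableSet E) (hXY : ∀ ω ∉ E, X ω = Y ω)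
    (M K : ℝ) (hM : 0 < M) (hK : 0 < K)
    (hXi : Integrable (fun ω => |X ω| ^ 3) P) (hYi : Integrable (fun ω => |Y ω| ^ 3) P)
    (hX3 : ∫ ω, |X ω| ^ 3 ∂P ≤ M ^ 3) (hY3 : ∫ ω, |Y ω| ^ 3 ∂P ≤ M ^ 3)
    (hXm : |∫ ω, X ω ∂P| ≤ K) (hYm : |∫ ω, Y ω ∂P| ≤ K) :
    |variance X P - variance Y P| ≤
      2 * M ^ 2 * (P E).toReal ^ ((1 : ℝ) / 3) +
        4 * K * M * (P E).toReal ^ ((2 : ℝ) / 3) := by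
  set g : Ω → ℝ := E.indicator (fun _ => (1:ℝ)) with hg
  have hgm : Measurable g := measurable_const.indicator hE
  have mulg : ∀ h : Ω → ℝ, (fun ω => h ω * g ω) = E.indicator h := by
    intro h; funext ω
    by_cases hω : ω ∈ E <;> simp [hg, Set.indicator_apply, hω]
  have hX3m : MemLp X 3 P := memL3 hX hXi
  have hY3m : MemLp Y 3 P := memL3 hY hYi
  have hX2 : MemLp X 2 P := hX3m.mono_exponent (by norm_num)
  have hY2 : MemLp Y 2 P := hY3m.mono_exponent (by norm_num)
  have hX1 : Integrable X P := hX2.integrable one_le_two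
  have hY1 : Integrable Y P := hY2.integrable one_le_two
  have hXsq : Integrable (fun ω => X ω ^ 2) P := hX2.integrable_sq
  have hYsq : Integrable (fun ω => Y ω ^ 2) P := hY2.integrable_sq
  -- sq bounds
  have bX2 := bound_sq P hX hE hM hXi hX3
  have bY2 := bound_sq P hY hE hM hYi hY3
  have bX1 := bound_one P hX hE hM hXi hX3
  have bY1 := bound_one P hY hE hM hYi hY3
  -- term A
  have intA1 : Integrable (fun ω => (X ω ^ 2 - Y ω ^ 2) * g ω) P := by
    rw [mulg]; exact (hXsq.sub hYsq).indicator hE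
  have intA2 : Integrable (fun ω => |X ω ^ 2 - Y ω ^ 2| * g ω) P := by
    rw [mulg]; exact ((hXsq.sub hYsq).abs).indicator hE
  have intA3 : Integrable (fun ω => (|X ω| ^ 2 + |Y ω| ^ 2) * g ω) P := by
    rw [mulg]
    refine Integrable.indicator ?_ hE
    simp only [sq_abs]; exact hXsq.add hYsq
  have eqA : ∫ ω, X ω ^ 2 ∂P - ∫ ω, Y ω ^ 2 ∂P = ∫ ω, (X ω ^ 2 - Y ω ^ 2) * g ω ∂P := by
    rw [← integral_sub hXsq hYsq]
    refine integral_congr_ae (Filter.Eventually.of_forall fun ω => ?_)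
    by_cases hω : ω ∈ E
    · simp [hg, Set.indicator_apply, hω]
    · simp [hg, Set.indicator_apply, hω, hXY ω hω]
  have termA : |∫ ω, X ω ^ 2 ∂P - ∫ ω, Y ω ^ 2 ∂P| ≤ 2 * M ^ 2 * (P E).toReal ^ ((1:ℝ)/3) := by
    rw [eqA]
    calc |∫ ω, (X ω ^ 2 - Y ω ^ 2) * g ω ∂P|
        ≤ ∫ ω, |(X ω ^ 2 - Y ω ^ 2) * g ω| ∂P := by simpa only [Real.norm_eq_abs] using norm_integral_le_integral_norm (μ := P) (fun ω => (X ω ^ 2 - Y ω ^ 2) * g ω)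
      _ = ∫ ω, |X ω ^ 2 - Y ω ^ 2| * g ω ∂P := by
          refine integral_congr_ae (Filter.Eventually.of_forall fun ω => ?_)
          by_cases hω : ω ∈ E <;> simp [hg, Set.indicator_apply, hω, abs_mul]
      _ ≤ ∫ ω, (|X ω| ^ 2 + |Y ω| ^ 2) * g ω ∂P := by
          refine integral_mono intA2 intA3 fun ω => ?_
          have hg0 : 0 ≤ g ω := Set.indicator_nonneg (fun _ _ => zero_le_one) ω
          refine mul_le_mul_of_nonneg_right ?_ hg0
          calc |X ω ^ 2 - Y ω ^ 2| ≤ |X ω ^ 2| + |Y ω ^ 2| := abs_sub _ _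
            _ = |X ω| ^ 2 + |Y ω| ^ 2 := by rw [abs_pow, abs_pow]
      _ = (∫ ω, |X ω| ^ 2 * g ω ∂P) + ∫ ω, |Y ω| ^ 2 * g ω ∂P := by
          rw [← integral_add]
          · refine integral_congr_ae (Filter.Eventually.of_forall fun ω => ?_)
            ring
          · rw [mulg]; exact (by simpa [abs_pow, sq_abs] using hXsq : Integrable (fun ω => |X ω| ^ 2) P).indicator hE
          · rw [mulg]; exact (by simpa [abs_pow, sq_abs] using hYsq : Integrable (fun ω => |Y ω| ^ 2) P).indicator hE
      _ ≤ M ^ 2 * (P E).toReal ^ ((1:ℝ)/3) + M ^ 2 * (P E).toReal ^ ((1:ℝ)/3) := add_le_add bX2 bY2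
      _ = 2 * M ^ 2 * (P E).toReal ^ ((1:ℝ)/3) := by ring
  -- term B
  have eqB : ∫ ω, X ω ∂P - ∫ ω, Y ω ∂P = ∫ ω, (X ω - Y ω) * g ω ∂P := by
    rw [← integral_sub hX1 hY1]
    refine integral_congr_ae (Filter.Eventually.of_forall fun ω => ?_)
    by_cases hω : ω ∈ E
    · simp [hg, Set.indicator_apply, hω]
    · simp [hg, Set.indicator_apply, hω, hXY ω hω]
  have termB0 : |∫ ω, X ω ∂P - ∫ ω, Y ω ∂P| ≤ 2 * M * (P E).toReal ^ ((2:ℝ)/3) := by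
    rw [eqB]
    calc |∫ ω, (X ω - Y ω) * g ω ∂P|
        ≤ ∫ ω, |(X ω - Y ω) * g ω| ∂P := by simpa only [Real.norm_eq_abs] using norm_integral_le_integral_norm (μ := P) (fun ω => (X ω - Y ω) * g ω)
      _ = ∫ ω, |X ω - Y ω| * g ω ∂P := by
          refine integral_congr_ae (Filter.Eventually.of_forall fun ω => ?_)
          by_cases hω : ω ∈ E <;> simp [hg, Set.indicator_apply, hω, abs_mul]
      _ ≤ ∫ ω, (|X ω| + |Y ω|) * g ω ∂P := by
          refine integral_mono ?_ ?_ fun ω => ?_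
          · rw [mulg]; exact ((hX1.sub hY1).abs).indicator hE
          · rw [mulg]; exact (hX1.abs.add hY1.abs).indicator hE
          · exact mul_le_mul_of_nonneg_right (abs_sub _ _)
              (Set.indicator_nonneg (fun _ _ => zero_le_one) ω)
      _ = (∫ ω, |X ω| * g ω ∂P) + ∫ ω, |Y ω| * g ω ∂P := by
          rw [← integral_add]
          · refine integral_congr_ae (Filter.Eventually.of_forall fun ω => ?_)
            ring
          · rw [mulg]; exact hX1.abs.indicator hE
          · rw [mulg]; exact hY1.abs.indicator hE
      _ ≤ M * (P E).toReal ^ ((2:ℝ)/3) + M * (P E).toReal ^ ((2:ℝ)/3) := add_le_add bX1 bY1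
      _ = 2 * M * (P E).toReal ^ ((2:ℝ)/3) := by ring
  have termB : |(∫ ω, X ω ∂P) ^ 2 - (∫ ω, Y ω ∂P) ^ 2| ≤
      4 * K * M * (P E).toReal ^ ((2:ℝ)/3) := by
    have : (∫ ω, X ω ∂P) ^ 2 - (∫ ω, Y ω ∂P) ^ 2 =
        (∫ ω, X ω ∂P - ∫ ω, Y ω ∂P) * (∫ ω, X ω ∂P + ∫ ω, Y ω ∂P) := by ring
    rw [this, abs_mul]
    have h2K : |∫ ω, X ω ∂P + ∫ ω, Y ω ∂P| ≤ 2 * K := by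
      calc |∫ ω, X ω ∂P + ∫ ω, Y ω ∂P| ≤ |∫ ω, X ω ∂P| + |∫ ω, Y ω ∂P| := abs_add_le _ _
        _ ≤ K + K := add_le_add hXm hYm
        _ = 2 * K := by ring
    calc |∫ ω, X ω ∂P - ∫ ω, Y ω ∂P| * |∫ ω, X ω ∂P + ∫ ω, Y ω ∂P|
        ≤ (2 * M * (P E).toReal ^ ((2:ℝ)/3)) * (2 * K) :=
          mul_le_mul termB0 h2K (abs_nonneg _) (by positivity)
      _ = 4 * K * M * (P E).toReal ^ ((2:ℝ)/3) := by ring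
  -- conclude
  rw [variance_eq_sub hX2, variance_eq_sub hY2]
  simp only [Pi.pow_apply]
  calc |(∫ ω, X ω ^ 2 ∂P - (∫ ω, X ω ∂P) ^ 2) - (∫ ω, Y ω ^ 2 ∂P - (∫ ω, Y ω ∂P) ^ 2)|
      = |(∫ ω, X ω ^ 2 ∂P - ∫ ω, Y ω ^ 2 ∂P) - ((∫ ω, X ω ∂P) ^ 2 - (∫ ω, Y ω ∂P) ^ 2)| := by
        ring_nf
    _ ≤ |∫ ω, X ω ^ 2 ∂P - ∫ ω, Y ω ^ 2 ∂P| + |(∫ ω, X ω ∂P) ^ 2 - (∫ ω, Y ω ∂P) ^ 2| :=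
        abs_sub _ _
    _ ≤ 2 * M ^ 2 * (P E).toReal ^ ((1:ℝ)/3) + 4 * K * M * (P E).toReal ^ ((2:ℝ)/3) :=
        add_le_add termA termB
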